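/- arXiv:2510.16927 — 2 statements merged into one kernel-verified Lean document; each statement's English description precedes it below -/
import Mathlib

section
/- Let X ∈ ℝ^{L×d_V} with every row standard deviation σ_i(X) positive, let Y = LayerNorm(X), and let W₁ ∈ ℝ^{d_V×d_ff}, W₂ ∈ ℝ^{d_ff×d_V}. Then S = Y + ReLU(Y·W₁)·W₂ satisfies ‖S‖₂ ≤ sqrt(L·d_V)·(1 + sqrt(min(L, d_ff))·‖W₁‖₂·‖W₂‖₂). -/
noncomputable section

open Matrix

attribute [local instance] Matrix.frobeniusNormedAddCommGroup Matrix.frobeniusNormedSpace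

/-- Frobenius norm of a real matrix. -/
def frob {m n : ℕ} (A : Matrix (Fin m) (Fin n) ℝ) : ℝ :=
  Real.sqrt (∑ i, ∑ j, A i j ^ 2)

/-- Spectral norm (largest singular value) of a real matrix: the operator norm of the
associated linear map between Euclidean spaces. -/
def spec {m n : ℕ} (A : Matrix (Fin m) (Fin n) ℝ) : ℝ :=
  ‖LinearMap.toContinuousLinearMap (Matrix.toEuclideanLin A)‖

/-- Centering matrix `C = Iₙ - (1/n)·𝟙𝟙ᵀ`. -/
def centerC (n : ℕ) : Matrix (Fin n) (Fin n) ℝ :=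
  1 - (n : ℝ)⁻¹ • Matrix.of (fun _ _ => (1 : ℝ))

/-- Row-centered matrix `M(X) = X·C`. -/
def centered {m n : ℕ} (X : Matrix (Fin m) (Fin n) ℝ) : Matrix (Fin m) (Fin n) ℝ :=
  X * centerC n

/-- Row standard deviations `σᵢ(X) = sqrt((1/n)·Σⱼ M(X)ᵢⱼ²)`. -/
def rowSigma {m n : ℕ} (X : Matrix (Fin m) (Fin n) ℝ) (i : Fin m) : ℝ :=
  Real.sqrt ((n : ℝ)⁻¹ * ∑ j, centered X i j ^ 2)

/-- `P(X) = diag(σ₁(X),…,σ_m(X))⁻¹`. -/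
def Pmat {m n : ℕ} (X : Matrix (Fin m) (Fin n) ℝ) : Matrix (Fin m) (Fin m) ℝ :=
  Matrix.diagonal fun i => (rowSigma X i)⁻¹

/-- `LayerNorm(X) = P(X)·M(X)`. -/
def layerNorm {m n : ℕ} (X : Matrix (Fin m) (Fin n) ℝ) : Matrix (Fin m) (Fin n) ℝ :=
  Pmat X * centered X

/-- Entrywise ReLU of a matrix: `ReLU(X)ᵢⱼ = max(0, Xᵢⱼ)`. -/
def reluM {m n : ℕ} (X : Matrix (Fin m) (Fin n) ℝ) : Matrix (Fin m) (Fin n) ℝ :=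
  Matrix.of fun i j => max 0 (X i j)

/-! Each row of `LayerNorm X` has squared norm `n`, or `0` when the row is constant, so
`‖LayerNorm X‖_F ≤ √(m n)`. The spectral norm is bounded by the Frobenius norm, ReLU does not
increase the Frobenius norm, and `‖A B‖_F ≤ ‖A‖_F ‖B‖₂`; this bounds the two summands of the
residual stream. The factor `√(min L d_ff)` is at least `1` unless `ReLU(Y W₁)` is empty. -/

lemma spec_nonneg {m n : ℕ} (A : Matrix (Fin m) (Fin n) ℝ) : 0 ≤ spec A :=
  norm_nonneg _

lemma spec_add_le {m n : ℕ} (A B : Matrix (Fin m) (Fin n) ℝ) :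
    spec (A + B) ≤ spec A + spec B := by
  simp only [spec, map_add]
  exact norm_add_le _ _

-- `spec` is Mathlib's L2 operator norm, which the local Frobenius instance hides from elaboration.
lemma spec_mul_le {m n k : ℕ} (A : Matrix (Fin m) (Fin n) ℝ) (B : Matrix (Fin n) (Fin k) ℝ) :
    spec (A * B) ≤ spec A * spec B :=
  @Matrix.l2_opNorm_mul _ _ _ _ _ _ _ _ _ _ A B

lemma spec_transpose {m n : ℕ} (A : Matrix (Fin m) (Fin n) ℝ) : spec Aᵀ = spec A := by
  rw [← Matrix.conjTranspose_eq_transpose_of_trivial]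
  exact @Matrix.l2_opNorm_conjTranspose _ _ _ _ _ _ _ _ A

lemma sum_sq_mulVec_le {m n : ℕ} (A : Matrix (Fin m) (Fin n) ℝ) (v : Fin n → ℝ) :
    ∑ i, (A *ᵥ v) i ^ 2 ≤ spec A ^ 2 * ∑ j, v j ^ 2 := by
  have h := (LinearMap.toContinuousLinearMap (Matrix.toEuclideanLin A)).le_opNorm
    (WithLp.toLp 2 v)
  have h2 := pow_le_pow_left₀ (norm_nonneg _) h 2
  rwa [mul_pow, EuclideanSpace.real_norm_sq_eq, EuclideanSpace.real_norm_sq_eq] at h2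

lemma spec_le_of_sum_sq_mulVec_le {m n : ℕ} {A : Matrix (Fin m) (Fin n) ℝ} {c : ℝ} (hc : 0 ≤ c)
    (h : ∀ v : Fin n → ℝ, ∑ i, (A *ᵥ v) i ^ 2 ≤ c ^ 2 * ∑ j, v j ^ 2) : spec A ≤ c := by
  refine ContinuousLinearMap.opNorm_le_bound _ hc fun x => ?_
  refine (sq_le_sq₀ (norm_nonneg _) (by positivity)).mp ?_
  rw [mul_pow, EuclideanSpace.real_norm_sq_eq, EuclideanSpace.real_norm_sq_eq]
  exact h x.ofLp

lemma frob_nonneg {m n : ℕ} (A : Matrix (Fin m) (Fin n) ℝ) : 0 ≤ frob A :=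
  Real.sqrt_nonneg _

lemma frob_sq {m n : ℕ} (A : Matrix (Fin m) (Fin n) ℝ) : frob A ^ 2 = ∑ i, ∑ j, A i j ^ 2 :=
  Real.sq_sqrt (by positivity)

lemma spec_le_frob {m n : ℕ} (A : Matrix (Fin m) (Fin n) ℝ) : spec A ≤ frob A := by
  refine spec_le_of_sum_sq_mulVec_le (frob_nonneg A) fun v => ?_
  rw [frob_sq, Finset.sum_mul]
  exact Finset.sum_le_sum fun i _ => Finset.sum_mul_sq_le_sq_mul_sq Finset.univ (A i) v

lemma frob_mul_le {m n k : ℕ} (A : Matrix (Fin m) (Fin n) ℝ) (B : Matrix (Fin n) (Fin k) ℝ) :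
    frob (A * B) ≤ frob A * spec B := by
  refine (sq_le_sq₀ (frob_nonneg _) (mul_nonneg (frob_nonneg A) (spec_nonneg B))).mp ?_
  have hrow (i : Fin m) : ∑ j, (A * B) i j ^ 2 ≤ spec B ^ 2 * ∑ l, A i l ^ 2 := by
    rw [← spec_transpose B]
    simpa [Matrix.mulVec_transpose, Matrix.mul_apply, Matrix.vecMul, dotProduct]
      using sum_sq_mulVec_le Bᵀ (A i)
  rw [mul_pow, frob_sq, frob_sq, Finset.sum_mul]
  exact Finset.sum_le_sum fun i _ => (hrow i).trans_eq (mul_comm _ _)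

lemma frob_reluM_le {m n : ℕ} (A : Matrix (Fin m) (Fin n) ℝ) : frob (reluM A) ≤ frob A := by
  refine Real.sqrt_le_sqrt (Finset.sum_le_sum fun i _ => Finset.sum_le_sum fun j _ => ?_)
  rcases le_total 0 (A i j) with h | h <;> simp [reluM, h, sq_nonneg]

lemma frob_le_sqrt_min_mul_frob {m n : ℕ} (A : Matrix (Fin m) (Fin n) ℝ) :
    frob A ≤ √(min (m : ℝ) n) * frob A := by
  rcases Nat.eq_zero_or_pos m with rfl | hm
  · simp [frob]
  rcases Nat.eq_zero_or_pos n with rfl | hn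
  · simp [frob]
  refine le_mul_of_one_le_left (frob_nonneg A) (Real.one_le_sqrt.mpr ?_)
  exact le_min (by exact_mod_cast hm) (by exact_mod_cast hn)

lemma sum_sq_layerNorm_le {m n : ℕ} (X : Matrix (Fin m) (Fin n) ℝ) (i : Fin m) :
    ∑ j, layerNorm X i j ^ 2 ≤ n := by
  have hrow : ∑ j, layerNorm X i j ^ 2 = (rowSigma X i)⁻¹ ^ 2 * ∑ j, centered X i j ^ 2 := by
    simp [layerNorm, Pmat, Matrix.diagonal_mul, mul_pow, Finset.mul_sum]
  rcases eq_or_ne (rowSigma X i) 0 with hσ | hσ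
  · simp [hrow, hσ]
  rcases Nat.eq_zero_or_pos n with rfl | hn
  · simp
  have hvar : ∑ j, centered X i j ^ 2 = n * rowSigma X i ^ 2 := by
    rw [rowSigma, Real.sq_sqrt (by positivity), ← mul_assoc,
      mul_inv_cancel₀ (by positivity), one_mul]
  rw [hrow, hvar]
  exact le_of_eq (by field_simp)

lemma frob_layerNorm_le {m n : ℕ} (X : Matrix (Fin m) (Fin n) ℝ) :
    frob (layerNorm X) ≤ √((m : ℝ) * n) := by
  refine Real.sqrt_le_sqrt ((Finset.sum_le_sum fun i _ => sum_sq_layerNorm_le X i).trans ?_)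
  simp

theorem residual_stream_spectral_bound_general {L dV dff : ℕ}
    (X : Matrix (Fin L) (Fin dV) ℝ)
    (W1 : Matrix (Fin dV) (Fin dff) ℝ) (W2 : Matrix (Fin dff) (Fin dV) ℝ) :
    spec (layerNorm X + reluM (layerNorm X * W1) * W2) ≤
      Real.sqrt ((L : ℝ) * dV) *
        (1 + Real.sqrt (min (L : ℝ) dff) * spec W1 * spec W2) := by
  set Y := layerNorm X
  have hW1 := spec_nonneg W1
  have hW2 := spec_nonneg W2
  have hFF : spec (reluM (Y * W1) * W2) ≤ frob Y * (√(min (L : ℝ) dff) * spec W1 * spec W2) :=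
    calc spec (reluM (Y * W1) * W2) ≤ frob (reluM (Y * W1)) * spec W2 :=
          (spec_mul_le _ _).trans (by gcongr; exact spec_le_frob _)
      _ ≤ √(min (L : ℝ) dff) * frob (Y * W1) * spec W2 := by
          gcongr
          exact (frob_le_sqrt_min_mul_frob _).trans (by gcongr; exact frob_reluM_le _)
      _ ≤ √(min (L : ℝ) dff) * (frob Y * spec W1) * spec W2 := by
          gcongr
          exact frob_mul_le Y W1
      _ = frob Y * (√(min (L : ℝ) dff) * spec W1 * spec W2) := by ring
  calc spec (Y + reluM (Y * W1) * W2)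
        ≤ frob Y * (1 + √(min (L : ℝ) dff) * spec W1 * spec W2) := by
        linarith [spec_add_le Y (reluM (Y * W1) * W2), spec_le_frob Y]
    _ ≤ √((L : ℝ) * dV) * (1 + √(min (L : ℝ) dff) * spec W1 * spec W2) := by
        gcongr
        exact frob_layerNorm_le X

/-- For `Y = LayerNorm(X)` (with positive row standard deviations),
`S = Y + ReLU(Y·W₁)·W₂` satisfies
`‖S‖₂ ≤ sqrt(L·d_V)·(1 + sqrt(min(L, d_ff))·‖W₁‖₂·‖W₂‖₂)`. -/
theorem residual_stream_spectral_bound {L dV dff : ℕ}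
    (X : Matrix (Fin L) (Fin dV) ℝ) (hσ : ∀ i, 0 < rowSigma X i)
    (W1 : Matrix (Fin dV) (Fin dff) ℝ) (W2 : Matrix (Fin dff) (Fin dV) ℝ) :
    spec (layerNorm X + reluM (layerNorm X * W1) * W2) ≤
      Real.sqrt ((L : ℝ) * dV) *
        (1 + Real.sqrt (min (L : ℝ) dff) * spec W1 * spec W2) :=
  residual_stream_spectral_bound_general X W1 W2
end
end

section
/- Let X ∈ ℝ^{m×n} with every row standard deviation σ_i(X) positive and set σ_min = min_i σ_i(X). Then for every direction V ∈ ℝ^{m×n}, the Fréchet derivative of LayerNorm at X satisfies ‖D LayerNorm(X)[V]‖_F ≤ (1/σ_min + ‖X‖₂²/(√n·σ_min³))·‖V‖_F. -/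
noncomputable section

open Matrix

attribute [local instance] Matrix.frobeniusNormedAddCommGroup Matrix.frobeniusNormedSpace

/-!
Row `i` of `D LayerNorm(X)[V]` is `σᵢ(X)⁻¹` times the component of `M(V)ᵢ` orthogonal to `M(X)ᵢ`:
differentiate `z ↦ z / rms z` and use `M(X)ᵢ ⬝ᵥ M(X)ᵢ = n σᵢ(X)²`. Centering is itself the
projection orthogonal to `𝟙`, and orthogonal projections do not increase norms, so
`‖D LayerNorm(X)[V]‖_F ≤ σ_min⁻¹ ‖V‖_F`, which gives the bound since the term
`‖X‖₂² / (√n σ_min³)` is nonnegative.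
-/

section Vectors

variable {ι : Type*} [Fintype ι]

def perpComponent (c : ι → ℝ) : (ι → ℝ) →L[ℝ] ι → ℝ :=
  LinearMap.toContinuousLinearMap
    { toFun a := a - (c ⬝ᵥ a / c ⬝ᵥ c) • c
      map_add' a b := by
        simp only [dotProduct_add, add_div, add_smul]
        abel
      map_smul' r a := by
        simp only [dotProduct_smul, smul_eq_mul, mul_div_assoc, smul_sub, smul_smul,
          RingHom.id_apply] }

theorem perpComponent_apply (c a : ι → ℝ) :
    perpComponent c a = a - (c ⬝ᵥ a / c ⬝ᵥ c) • c :=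
  rfl

theorem perpComponent_dotProduct_self_le (c a : ι → ℝ) :
    perpComponent c a ⬝ᵥ perpComponent c a ≤ a ⬝ᵥ a := by
  by_cases hc : c ⬝ᵥ c = 0
  · simp [perpComponent_apply, hc]
  have hexpand : perpComponent c a ⬝ᵥ perpComponent c a = a ⬝ᵥ a - (c ⬝ᵥ a) ^ 2 / c ⬝ᵥ c := by
    simp only [perpComponent_apply, sub_dotProduct, dotProduct_sub, smul_dotProduct,
      dotProduct_smul, smul_eq_mul, dotProduct_comm a c]
    field_simp
    ring
  have : 0 ≤ (c ⬝ᵥ a) ^ 2 / c ⬝ᵥ c := div_nonneg (sq_nonneg _) (dotProduct_self_star_nonneg c)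
  linarith

def rms (z : ι → ℝ) : ℝ :=
  √((Fintype.card ι : ℝ)⁻¹ * z ⬝ᵥ z)

theorem dotProduct_self_eq_card_mul_rms_sq {z : ι → ℝ} (hz : 0 < rms z) :
    z ⬝ᵥ z = Fintype.card ι * rms z ^ 2 := by
  have hcard : (Fintype.card ι : ℝ) ≠ 0 := by
    rintro hcard
    simp [rms, hcard] at hz
  have hzz : 0 ≤ z ⬝ᵥ z := by simpa using dotProduct_self_star_nonneg z
  rw [rms, Real.sq_sqrt (by positivity), mul_inv_cancel_left₀ hcard]

variable {E : Type*} [NormedAddCommGroup E] [NormedSpace ℝ E]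

theorem HasFDerivAt.rms_inv_smul {u : E → ι → ℝ} {u' : E →L[ℝ] ι → ℝ} {x : E}
    (hu : HasFDerivAt u u' x) (hx : 0 < rms (u x)) :
    HasFDerivAt (fun y => (rms (u y))⁻¹ • u y)
      ((rms (u x))⁻¹ • (perpComponent (u x)).comp u') x := by
  have hcoord j : HasFDerivAt (fun y => u y j) ((ContinuousLinearMap.proj j).comp u') x :=
    hasFDerivAt_pi'.1 hu j
  have hrms := HasFDerivAt.sqrt ((HasFDerivAt.fun_sum (u := Finset.univ) fun j _ =>
    (hcoord j).fun_mul (hcoord j)).const_mul (Fintype.card ι : ℝ)⁻¹) (Real.sqrt_pos.1 hx).ne'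
  refine (((hasDerivAt_inv hx.ne').comp_hasFDerivAt x hrms).fun_smul hu).congr_fderiv ?_
  have hr : √((Fintype.card ι : ℝ)⁻¹ * ∑ i, u x i * u x i) = rms (u x) := rfl
  have hcc := dotProduct_self_eq_card_mul_rms_sq hx
  ext v j
  simp only [dotProduct] at hcc
  simp only [Function.comp_apply, hr]
  simp only [one_div, _root_.mul_inv_rev, Finset.sum_add_distrib, smul_add, neg_smul,
    _root_.add_apply, _root_.smul_apply, ContinuousLinearMap.smulRight_apply, _root_.neg_apply,
    _root_.sum_apply, ContinuousLinearMap.comp_apply, ContinuousLinearMap.proj_apply, smul_eq_mul,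
    Pi.add_apply, Pi.smul_apply, Pi.sub_apply, perpComponent_apply, dotProduct, hcc]
  field_simp
  ring

end Vectors

theorem centered_row {m n : ℕ} (Y : Matrix (Fin m) (Fin n) ℝ) (i : Fin m) :
    centered Y i = perpComponent 1 (Y i) := by
  ext j
  simp [centered, centerC, perpComponent_apply, Matrix.mul_apply, Matrix.one_apply, one_dotProduct,
    mul_sub, Finset.sum_mul, div_eq_mul_inv]

theorem rowSigma_eq_rms {m n : ℕ} (X : Matrix (Fin m) (Fin n) ℝ) (i : Fin m) :
    rowSigma X i = rms (centered X i) := by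
  simp [rowSigma, rms, dotProduct, sq]

theorem layerNorm_row {m n : ℕ} (Y : Matrix (Fin m) (Fin n) ℝ) (i : Fin m) :
    layerNorm Y i = (rowSigma Y i)⁻¹ • centered Y i := by
  ext j
  simp [layerNorm, Pmat]

theorem frob_le_mul_frob_of_rows {m n : ℕ} {A B : Matrix (Fin m) (Fin n) ℝ} {c : ℝ} (hc : 0 ≤ c)
    (h : ∀ i, A i ⬝ᵥ A i ≤ c ^ 2 * B i ⬝ᵥ B i) : frob A ≤ c * frob B := by
  rw [frob, frob, ← Real.sqrt_sq hc, ← Real.sqrt_mul (sq_nonneg c), Finset.mul_sum]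
  gcongr with i
  simpa [dotProduct, sq] using h i

/-- With the Frobenius norm on `Matrix m n ℝ`, `hasFDerivAt_pi` does not apply directly; we
transport along `Matrix.ofLinearEquiv`. -/
theorem hasFDerivAt_matrix_of_rows {E : Type*} [NormedAddCommGroup E] [NormedSpace ℝ E]
    {m n : Type*} [Fintype m] [Fintype n] {f : E → Matrix m n ℝ} {f' : E →L[ℝ] Matrix m n ℝ}
    {L : m → E →L[ℝ] n → ℝ} {x : E} (h : ∀ i, HasFDerivAt (fun y => f y i) (L i) x)
    (hL : ∀ v i, f' v i = L i v) : HasFDerivAt f f' x := by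
  let e := (Matrix.ofLinearEquiv ℝ (m := m) (n := n) (α := ℝ)).symm.toContinuousLinearEquiv
  refine e.comp_hasFDerivAt_iff.1 (hasFDerivAt_pi'' fun i => (h i).congr_fderiv ?_)
  ext v j
  exact congrFun (hL v i).symm j

def centeredRowCLM {m n : ℕ} (i : Fin m) : Matrix (Fin m) (Fin n) ℝ →L[ℝ] Fin n → ℝ :=
  LinearMap.toContinuousLinearMap
    { toFun V := centered V i
      map_add' V W := by
        simp only [centered, Matrix.add_mul]
        rfl
      map_smul' r V := by
        simp only [centered, Matrix.smul_mul]
        rfl }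

def layerNormFDeriv {m n : ℕ} (X : Matrix (Fin m) (Fin n) ℝ) :
    Matrix (Fin m) (Fin n) ℝ →L[ℝ] Matrix (Fin m) (Fin n) ℝ :=
  LinearMap.toContinuousLinearMap
    { toFun V := of fun i => (rowSigma X i)⁻¹ • perpComponent (centered X i) (centeredRowCLM i V)
      map_add' V W := by
        ext i j
        simp
      map_smul' r V := by
        ext i j
        simp [mul_left_comm] }

theorem layerNormFDeriv_apply {m n : ℕ} (X V : Matrix (Fin m) (Fin n) ℝ) (i : Fin m) :
    layerNormFDeriv X V i = (rowSigma X i)⁻¹ • perpComponent (centered X i) (centered V i) :=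
  rfl

theorem hasFDerivAt_layerNorm {m n : ℕ} (X : Matrix (Fin m) (Fin n) ℝ)
    (hσ : ∀ i, 0 < rowSigma X i) : HasFDerivAt layerNorm (layerNormFDeriv X) X := by
  refine hasFDerivAt_matrix_of_rows
    (L := fun i => (rms (centered X i))⁻¹ • (perpComponent (centered X i)).comp (centeredRowCLM i))
    (fun i => ?_) fun V i => (layerNormFDeriv_apply X V i).trans (by rw [rowSigma_eq_rms]; rfl)
  have hrow : (fun Y => layerNorm Y i) =
      fun Y => (rms (centeredRowCLM (n := n) i Y))⁻¹ • centeredRowCLM i Y :=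
    funext fun Y => by rw [layerNorm_row, rowSigma_eq_rms]; rfl
  rw [hrow]
  exact (centeredRowCLM i).hasFDerivAt.rms_inv_smul (rowSigma_eq_rms X i ▸ hσ i)

theorem layerNormFDeriv_row_dotProduct_self_le {m n : ℕ} (X V : Matrix (Fin m) (Fin n) ℝ)
    (i : Fin m) :
    layerNormFDeriv X V i ⬝ᵥ layerNormFDeriv X V i ≤ (rowSigma X i)⁻¹ ^ 2 * V i ⬝ᵥ V i := by
  rw [layerNormFDeriv_apply, smul_dotProduct, dotProduct_smul, smul_eq_mul, smul_eq_mul,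
    ← mul_assoc, ← sq]
  gcongr
  calc _ ≤ centered V i ⬝ᵥ centered V i := perpComponent_dotProduct_self_le _ _
    _ ≤ V i ⬝ᵥ V i := by
      rw [centered_row]
      exact perpComponent_dotProduct_self_le _ _

theorem frob_layerNormFDeriv_le {m n : ℕ} (X : Matrix (Fin m) (Fin n) ℝ)
    (hσ : ∀ i, 0 < rowSigma X i) (V : Matrix (Fin m) (Fin n) ℝ) :
    frob (layerNormFDeriv X V) ≤ (⨅ i, rowSigma X i)⁻¹ * frob V := by
  refine frob_le_mul_frob_of_rows (inv_nonneg.2 (Real.iInf_nonneg fun i => (hσ i).le))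
    fun i => (layerNormFDeriv_row_dotProduct_self_le X V i).trans ?_
  have : Nonempty (Fin m) := ⟨i⟩
  obtain ⟨i₀, hi₀⟩ := exists_eq_ciInf_of_finite (f := rowSigma X)
  have hmin_pos : 0 < ⨅ i, rowSigma X i := hi₀ ▸ hσ i₀
  have hmin_le : ⨅ i, rowSigma X i ≤ rowSigma X i := ciInf_le (Set.finite_range _).bddBelow i
  have hV : 0 ≤ V i ⬝ᵥ V i := by simpa using dotProduct_self_star_nonneg (V i)
  have := hσ i
  gcongr

theorem layerNorm_jacobian_norm_bound_general {m n : ℕ}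
    (X : Matrix (Fin m) (Fin n) ℝ) (hσ : ∀ i, 0 < rowSigma X i) :
    DifferentiableAt ℝ (fun Y : Matrix (Fin m) (Fin n) ℝ => layerNorm Y) X ∧
    ∀ V : Matrix (Fin m) (Fin n) ℝ,
      frob (fderiv ℝ (fun Y : Matrix (Fin m) (Fin n) ℝ => layerNorm Y) X V) ≤
        ((⨅ i, rowSigma X i)⁻¹ +
          spec X ^ 2 / (Real.sqrt n * (⨅ i, rowSigma X i) ^ 3)) * frob V := by
  have hD := hasFDerivAt_layerNorm X hσ
  have hmin : 0 ≤ ⨅ i, rowSigma X i := Real.iInf_nonneg fun i => (hσ i).le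
  refine ⟨hD.differentiableAt, fun V => ?_⟩
  rw [hD.fderiv]
  calc frob (layerNormFDeriv X V) ≤ (⨅ i, rowSigma X i)⁻¹ * frob V :=
        frob_layerNormFDeriv_le X hσ V
    _ ≤ _ := mul_le_mul_of_nonneg_right (le_add_of_nonneg_right (by positivity))
          (Real.sqrt_nonneg _)

/-- LayerNorm Jacobian norm bound.  With `σ_min = min_i σᵢ(X) > 0`,
`‖D LayerNorm(X)[V]‖_F ≤ (1/σ_min + ‖X‖₂²/(√n·σ_min³))·‖V‖_F` for every direction `V`. -/
theorem layerNorm_jacobian_norm_bound {m n : ℕ} (hm : 0 < m)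
    (X : Matrix (Fin m) (Fin n) ℝ) (hσ : ∀ i, 0 < rowSigma X i) :
    DifferentiableAt ℝ (fun Y : Matrix (Fin m) (Fin n) ℝ => layerNorm Y) X ∧
    ∀ V : Matrix (Fin m) (Fin n) ℝ,
      frob (fderiv ℝ (fun Y : Matrix (Fin m) (Fin n) ℝ => layerNorm Y) X V) ≤
        ((⨅ i, rowSigma X i)⁻¹ +
          spec X ^ 2 / (Real.sqrt n * (⨅ i, rowSigma X i) ^ 3)) * frob V :=
  layerNorm_jacobian_norm_bound_general X hσ
end
end
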